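/- For every integer m ≥ 2, the distinguished Cartan matrix D_{m,1} of the Lie superalgebra D(m,1) is invertible over ℚ, its inverse is symmetric, and for 1 ≤ i ≤ j ≤ m+1 its entries are: (D_{m,1}^{-1})_{ij} = i − 2 if 1 ≤ i ≤ j ≤ m−1; (D_{m,1}^{-1})_{ij} = i/2 − 1 if 1 ≤ i < m and j ∈ {m, m+1}; (D_{m,1}^{-1})_{m,m+1} = (m−3)/4; and (D_{m,1}^{-1})_{mm} = (D_{m,1}^{-1})_{m+1,m+1} = (m−1)/4. -/
import Mathlib


def dd (m i k : ℕ) : ℚ :=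
  if i = k then (if i = 0 then 0 else 2)
  else if (i + 1 = k ∧ i + 2 ≤ m) ∨ (k + 1 = i ∧ k + 2 ≤ m) then -1
  else if (i + 2 = m ∧ k = m) ∨ (k + 2 = m ∧ i = m) then -1
  else 0

def mf (m i j : ℕ) : ℚ :=
  if j + 2 ≤ m then (i : ℚ) - 1
  else if i + 1 < m then ((i : ℚ) + 1) / 2 - 1
  else if i = j then ((m : ℚ) - 1) / 4
  else ((m : ℚ) - 3) / 4

def mmu (m i j : ℕ) : ℚ := if i ≤ j then mf m i j else mf m j i

lemma dd_eq_zero (m i k : ℕ) (h1 : i ≠ k)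
    (h2 : ¬((i + 1 = k ∧ i + 2 ≤ m) ∨ (k + 1 = i ∧ k + 2 ≤ m)))
    (h3 : ¬((i + 2 = m ∧ k = m) ∨ (k + 2 = m ∧ i = m))) : dd m i k = 0 := by
  unfold dd; rw [if_neg h1, if_neg h2, if_neg h3]

lemma dd_diag (m i : ℕ) (h : i ≠ 0) : dd m i i = 2 := by
  unfold dd; rw [if_pos rfl, if_neg h]

lemma dd_adj (m i k : ℕ) (h : i + 1 = k) (h2 : i + 2 ≤ m) : dd m i k = -1 := by
  unfold dd; rw [if_neg (by omega), if_pos (Or.inl ⟨h, h2⟩)]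

lemma dd_adj' (m i k : ℕ) (h : k + 1 = i) (h2 : k + 2 ≤ m) : dd m i k = -1 := by
  unfold dd; rw [if_neg (by omega), if_pos (Or.inr ⟨h, h2⟩)]

lemma dd_far (m i : ℕ) (h : i + 2 = m) : dd m i m = -1 := by
  unfold dd; rw [if_neg (by omega), if_neg (by omega), if_pos (Or.inl ⟨h, rfl⟩)]

lemma dd_far' (m k : ℕ) (h : k + 2 = m) : dd m m k = -1 := by
  unfold dd; rw [if_neg (by omega), if_neg (by omega), if_pos (Or.inr ⟨h, rfl⟩)]

lemma mmu_a (m i j : ℕ) (h1 : i ≤ j) (h2 : j + 2 ≤ m) : mmu m i j = (i : ℚ) - 1 := by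
  unfold mmu; rw [if_pos h1]; unfold mf; rw [if_pos h2]

lemma mmu_a' (m i j : ℕ) (h1 : j < i) (h2 : i + 2 ≤ m) : mmu m i j = (j : ℚ) - 1 := by
  unfold mmu; rw [if_neg (by omega)]; unfold mf; rw [if_pos h2]

lemma mmu_b (m i j : ℕ) (h1 : i ≤ j) (h2 : ¬ j + 2 ≤ m) (h3 : i + 1 < m) :
    mmu m i j = ((i : ℚ) + 1) / 2 - 1 := by
  unfold mmu; rw [if_pos h1]; unfold mf; rw [if_neg h2, if_pos h3]

lemma mmu_b' (m i j : ℕ) (h1 : j < i) (h2 : ¬ i + 2 ≤ m) (h3 : j + 1 < m) :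
    mmu m i j = ((j : ℚ) + 1) / 2 - 1 := by
  unfold mmu; rw [if_neg (by omega)]; unfold mf; rw [if_neg h2, if_pos h3]

lemma mmu_c (m i : ℕ) (h2 : ¬ i + 2 ≤ m) (h3 : ¬ i + 1 < m) :
    mmu m i i = ((m : ℚ) - 1) / 4 := by
  unfold mmu; rw [if_pos le_rfl]; unfold mf; rw [if_neg h2, if_neg h3, if_pos rfl]

lemma mmu_d (m i j : ℕ) (h1 : i ≤ j) (hne : i ≠ j) (h2 : ¬ j + 2 ≤ m) (h3 : ¬ i + 1 < m) :
    mmu m i j = ((m : ℚ) - 3) / 4 := by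
  unfold mmu; rw [if_pos h1]; unfold mf; rw [if_neg h2, if_neg h3, if_neg hne]

lemma mmu_d' (m i j : ℕ) (h1 : j < i) (h2 : ¬ i + 2 ≤ m) (h3 : ¬ j + 1 < m) :
    mmu m i j = ((m : ℚ) - 3) / 4 := by
  unfold mmu; rw [if_neg (by omega)]; unfold mf; rw [if_neg h2, if_neg h3, if_neg (by omega)]

lemma sum_support (N : ℕ) (f : ℕ → ℚ) (S : Finset ℕ) (hS : S ⊆ Finset.range N)
    (h0 : ∀ k, k < N → k ∉ S → f k = 0) :
    ∑ k ∈ Finset.range N, f k = ∑ k ∈ S, f k :=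
  (Finset.sum_subset hS fun k hk hk' => h0 k (Finset.mem_range.mp hk) hk').symm

lemma key (m : ℕ) (hm : 2 ≤ m) (i j : ℕ) (hi : i ≤ m) (hj : j ≤ m) :
    ∑ k ∈ Finset.range (m + 1), dd m i k * mmu m k j = if i = j then 1 else 0 := by
  rcases eq_or_lt_of_le hm with h2 | h3
  · -- m = 2 : finite check
    subst h2
    interval_cases i <;> interval_cases j <;>
      norm_num [Finset.sum_range_succ, dd, mmu, mf]
  · obtain ⟨n, rfl⟩ : ∃ n, m = n + 3 := ⟨m - 3, by omega⟩
    obtain h0 | ⟨hmid1, hmid2⟩ | h1 | hA | hB :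
        i = 0 ∨ (1 ≤ i ∧ i ≤ n) ∨ i = n + 1 ∨ i = n + 2 ∨ i = n + 3 := by omega
    · -- row i = 0
      subst h0
      rw [sum_support (n + 3 + 1) _ {1}
          (by intro x hx; simp only [Finset.mem_singleton] at hx
              simp only [Finset.mem_range]; omega)
          (fun k hk hkS => by
            have hk1 : k ≠ 1 := by simpa using hkS
            rcases Nat.eq_zero_or_pos k with rfl | hkpos
            · rw [show dd (n+3) 0 0 = 0 from by unfold dd; rw [if_pos rfl, if_pos rfl],
                zero_mul]
            · rw [dd_eq_zero (n+3) 0 k (by omega) (by omega) (by omega), zero_mul]),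
        Finset.sum_singleton]
      rw [dd_adj (n+3) 0 1 rfl (by omega)]
      obtain hj0 | ⟨hj1, hj1'⟩ | hj2 | hj3 :
          j = 0 ∨ (1 ≤ j ∧ j + 2 ≤ n + 3) ∨ j = n + 2 ∨ j = n + 3 := by omega
      · subst hj0
        rw [mmu_a' (n+3) 1 0 (by omega) (by omega), if_pos rfl]; norm_num
      · rw [mmu_a (n+3) 1 j hj1 hj1', if_neg (by omega)]; norm_num
      · subst hj2
        rw [mmu_b (n+3) 1 (n+2) (by omega) (by omega) (by omega), if_neg (by omega)]; norm_num
      · subst hj3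
        rw [mmu_b (n+3) 1 (n+3) (by omega) (by omega) (by omega), if_neg (by omega)]; norm_num
    · -- row 1 ≤ i ≤ n : write i = p + 1
      obtain ⟨p, rfl⟩ : ∃ p, i = p + 1 := ⟨i - 1, by omega⟩
      have hp : p + 1 ≤ n := hmid2
      rw [sum_support (n + 3 + 1) _ {p, p + 1, p + 2}
          (by intro x hx; simp only [Finset.mem_insert, Finset.mem_singleton] at hx
              simp only [Finset.mem_range]; omega)
          (fun k hk hkS => by
            simp only [Finset.mem_insert, Finset.mem_singleton] at hkS
            push_neg at hkS
            rw [dd_eq_zero (n+3) (p+1) k (by omega) (by omega) (by omega), zero_mul]),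
        Finset.sum_insert (by simp only [Finset.mem_insert, Finset.mem_singleton]; omega),
        Finset.sum_pair (by omega)]
      rw [dd_adj' (n+3) (p+1) p rfl (by omega), dd_diag (n+3) (p+1) (by omega),
        dd_adj (n+3) (p+1) (p+2) rfl (by omega)]
      obtain hja | hjb | hjc | hjd | hje | hjf | hjg :
          (j + 1 ≤ p) ∨ p = j ∨ j = p + 1 ∨ j = p + 2 ∨
          (p + 3 ≤ j ∧ j + 2 ≤ n + 3) ∨ j = n + 2 ∨ j = n + 3 := by omega
      · rw [mmu_a' (n+3) p j (by omega) (by omega),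
          mmu_a' (n+3) (p+1) j (by omega) (by omega),
          mmu_a' (n+3) (p+2) j (by omega) (by omega), if_neg (by omega)]
        ring
      · subst hjb
        rw [mmu_a (n+3) p p le_rfl (by omega),
          mmu_a' (n+3) (p+1) p (by omega) (by omega),
          mmu_a' (n+3) (p+2) p (by omega) (by omega), if_neg (by omega)]
        ring
      · subst hjc
        rw [mmu_a (n+3) p (p+1) (by omega) (by omega),
          mmu_a (n+3) (p+1) (p+1) le_rfl (by omega),
          mmu_a' (n+3) (p+2) (p+1) (by omega) (by omega), if_pos rfl]
        push_cast; ring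
      · subst hjd
        rw [mmu_a (n+3) p (p+2) (by omega) (by omega),
          mmu_a (n+3) (p+1) (p+2) (by omega) (by omega),
          mmu_a (n+3) (p+2) (p+2) le_rfl (by omega), if_neg (by omega)]
        push_cast; ring
      · rw [mmu_a (n+3) p j (by omega) hje.2,
          mmu_a (n+3) (p+1) j (by omega) hje.2,
          mmu_a (n+3) (p+2) j (by omega) hje.2, if_neg (by omega)]
        push_cast; ring
      · subst hjf
        rw [mmu_b (n+3) p (n+2) (by omega) (by omega) (by omega),
          mmu_b (n+3) (p+1) (n+2) (by omega) (by omega) (by omega),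
          mmu_b (n+3) (p+2) (n+2) (by omega) (by omega) (by omega), if_neg (by omega)]
        push_cast; ring
      · subst hjg
        rw [mmu_b (n+3) p (n+3) (by omega) (by omega) (by omega),
          mmu_b (n+3) (p+1) (n+3) (by omega) (by omega) (by omega),
          mmu_b (n+3) (p+2) (n+3) (by omega) (by omega) (by omega), if_neg (by omega)]
        push_cast; ring
    · -- row i = n + 1 (= m - 2)
      subst h1
      rw [sum_support (n + 3 + 1) _ {n, n + 1, n + 2, n + 3}
          (by intro x hx; simp only [Finset.mem_insert, Finset.mem_singleton] at hx
              simp only [Finset.mem_range]; omega)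
          (fun k hk hkS => by
            simp only [Finset.mem_insert, Finset.mem_singleton] at hkS
            push_neg at hkS
            rw [dd_eq_zero (n+3) (n+1) k (by omega) (by omega) (by omega), zero_mul]),
        Finset.sum_insert (by simp only [Finset.mem_insert, Finset.mem_singleton]; omega),
        Finset.sum_insert (by simp only [Finset.mem_insert, Finset.mem_singleton]; omega),
        Finset.sum_pair (by omega)]
      rw [dd_adj' (n+3) (n+1) n rfl (by omega), dd_diag (n+3) (n+1) (by omega),
        dd_adj (n+3) (n+1) (n+2) rfl (by omega), dd_far (n+3) (n+1) (by omega)]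
      obtain hja | hjb | hjc | hjd | hje :
          (j + 1 ≤ n) ∨ n = j ∨ j = n + 1 ∨ j = n + 2 ∨ j = n + 3 := by omega
      · rw [mmu_a' (n+3) n j (by omega) (by omega),
          mmu_a' (n+3) (n+1) j (by omega) (by omega),
          mmu_b' (n+3) (n+2) j (by omega) (by omega) (by omega),
          mmu_b' (n+3) (n+3) j (by omega) (by omega) (by omega), if_neg (by omega)]
        ring
      · subst hjb
        rw [mmu_a (n+3) n n le_rfl (by omega),
          mmu_a' (n+3) (n+1) n (by omega) (by omega),
          mmu_b' (n+3) (n+2) n (by omega) (by omega) (by omega),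
          mmu_b' (n+3) (n+3) n (by omega) (by omega) (by omega), if_neg (by omega)]
        ring
      · subst hjc
        rw [mmu_a (n+3) n (n+1) (by omega) (by omega),
          mmu_a (n+3) (n+1) (n+1) le_rfl (by omega),
          mmu_b' (n+3) (n+2) (n+1) (by omega) (by omega) (by omega),
          mmu_b' (n+3) (n+3) (n+1) (by omega) (by omega) (by omega), if_pos rfl]
        push_cast; ring
      · subst hjd
        rw [mmu_b (n+3) n (n+2) (by omega) (by omega) (by omega),
          mmu_b (n+3) (n+1) (n+2) (by omega) (by omega) (by omega),
          mmu_c (n+3) (n+2) (by omega) (by omega),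
          mmu_d' (n+3) (n+3) (n+2) (by omega) (by omega) (by omega), if_neg (by omega)]
        push_cast; ring
      · subst hje
        rw [mmu_b (n+3) n (n+3) (by omega) (by omega) (by omega),
          mmu_b (n+3) (n+1) (n+3) (by omega) (by omega) (by omega),
          mmu_d (n+3) (n+2) (n+3) (by omega) (by omega) (by omega) (by omega),
          mmu_c (n+3) (n+3) (by omega) (by omega), if_neg (by omega)]
        push_cast; ring
    · -- row i = n + 2 (= m - 1)
      subst hA
      rw [sum_support (n + 3 + 1) _ {n + 1, n + 2}
          (by intro x hx; simp only [Finset.mem_insert, Finset.mem_singleton] at hx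
              simp only [Finset.mem_range]; omega)
          (fun k hk hkS => by
            simp only [Finset.mem_insert, Finset.mem_singleton] at hkS
            push_neg at hkS
            rw [dd_eq_zero (n+3) (n+2) k (by omega) (by omega) (by omega), zero_mul]),
        Finset.sum_pair (by omega)]
      rw [dd_adj' (n+3) (n+2) (n+1) rfl (by omega), dd_diag (n+3) (n+2) (by omega)]
      obtain hja | hjb | hjc | hjd :
          (j ≤ n) ∨ j = n + 1 ∨ j = n + 2 ∨ j = n + 3 := by omega
      · rw [mmu_a' (n+3) (n+1) j (by omega) (by omega),
          mmu_b' (n+3) (n+2) j (by omega) (by omega) (by omega), if_neg (by omega)]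
        ring
      · subst hjb
        rw [mmu_a (n+3) (n+1) (n+1) le_rfl (by omega),
          mmu_b' (n+3) (n+2) (n+1) (by omega) (by omega) (by omega), if_neg (by omega)]
        push_cast; ring
      · subst hjc
        rw [mmu_b (n+3) (n+1) (n+2) (by omega) (by omega) (by omega),
          mmu_c (n+3) (n+2) (by omega) (by omega), if_pos rfl]
        push_cast; ring
      · subst hjd
        rw [mmu_b (n+3) (n+1) (n+3) (by omega) (by omega) (by omega),
          mmu_d (n+3) (n+2) (n+3) (by omega) (by omega) (by omega) (by omega),
          if_neg (by omega)]
        push_cast; ring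
    · -- row i = n + 3 (= m)
      subst hB
      rw [sum_support (n + 3 + 1) _ {n + 1, n + 3}
          (by intro x hx; simp only [Finset.mem_insert, Finset.mem_singleton] at hx
              simp only [Finset.mem_range]; omega)
          (fun k hk hkS => by
            simp only [Finset.mem_insert, Finset.mem_singleton] at hkS
            push_neg at hkS
            rw [dd_eq_zero (n+3) (n+3) k (by omega) (by omega) (by omega), zero_mul]),
        Finset.sum_pair (by omega)]
      rw [dd_far' (n+3) (n+1) rfl, dd_diag (n+3) (n+3) (by omega)]
      obtain hja | hjb | hjc | hjd :
          (j ≤ n) ∨ j = n + 1 ∨ j = n + 2 ∨ j = n + 3 := by omega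
      · rw [mmu_a' (n+3) (n+1) j (by omega) (by omega),
          mmu_b' (n+3) (n+3) j (by omega) (by omega) (by omega), if_neg (by omega)]
        ring
      · subst hjb
        rw [mmu_a (n+3) (n+1) (n+1) le_rfl (by omega),
          mmu_b' (n+3) (n+3) (n+1) (by omega) (by omega) (by omega), if_neg (by omega)]
        push_cast; ring
      · subst hjc
        rw [mmu_b (n+3) (n+1) (n+2) (by omega) (by omega) (by omega),
          mmu_d' (n+3) (n+3) (n+2) (by omega) (by omega) (by omega), if_neg (by omega)]
        push_cast; ring
      · subst hjd
        rw [mmu_b (n+3) (n+1) (n+3) (by omega) (by omega) (by omega),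
          mmu_c (n+3) (n+3) (by omega) (by omega), if_pos rfl]
        push_cast; ring


/-- For an integer `m ≥ 2`, the distinguished Cartan matrix `D_{m,1}` of the Lie
superalgebra `D(m,1)` is the `(m+1) × (m+1)` matrix over `ℚ` with (1-based indexing)
`a_{11} = 0`, `a_{ii} = 2` for `2 ≤ i ≤ m+1`, `a_{i,i+1} = a_{i+1,i} = -1` for
`1 ≤ i ≤ m-1`, `a_{m-1,m+1} = a_{m+1,m-1} = -1`, and `0` elsewhere (in particular
`a_{m,m+1} = a_{m+1,m} = 0`).  It is invertible, its inverse `M` is symmetric, and for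
1-based indices `i ≤ j`: `M_{ij} = i - 2` if `j ≤ m-1`; `M_{ij} = i/2 - 1` if `i < m`
and `j ∈ {m, m+1}`; `M_{m,m+1} = (m-3)/4`; `M_{mm} = M_{m+1,m+1} = (m-1)/4`.
Here `i j : Fin (m+1)` represent the 1-based indices `i+1, j+1`. -/
theorem stmt_10 (m : ℕ) (hm : 2 ≤ m) (D M : Matrix (Fin (m + 1)) (Fin (m + 1)) ℚ)
    (hD : ∀ i j : Fin (m + 1), D i j =
      if (i : ℕ) = (j : ℕ) then (if (i : ℕ) = 0 then 0 else 2)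
      else if ((i : ℕ) + 1 = (j : ℕ) ∧ (i : ℕ) + 2 ≤ m) ∨
              ((j : ℕ) + 1 = (i : ℕ) ∧ (j : ℕ) + 2 ≤ m) then -1
      else if ((i : ℕ) + 2 = m ∧ (j : ℕ) = m) ∨ ((j : ℕ) + 2 = m ∧ (i : ℕ) = m) then -1
      else 0)
    (hMsymm : ∀ i j : Fin (m + 1), M j i = M i j)
    (hM : ∀ i j : Fin (m + 1), (i : ℕ) ≤ (j : ℕ) → M i j =
      if (j : ℕ) + 2 ≤ m then ((i : ℕ) : ℚ) - 1
      else if (i : ℕ) + 1 < m then (((i : ℕ) : ℚ) + 1) / 2 - 1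
      else if (i : ℕ) = (j : ℕ) then ((m : ℚ) - 1) / 4
      else ((m : ℚ) - 3) / 4) :
    D * M = 1 ∧ M * D = 1 := by
  have hD' : ∀ i j : Fin (m + 1), D i j = dd m i j := by
    intro i j; rw [hD]; rfl
  have hM' : ∀ i j : Fin (m + 1), M i j = mmu m i j := by
    intro i j
    rcases le_or_gt (i : ℕ) (j : ℕ) with h | h
    · rw [hM i j h]; unfold mmu; rw [if_pos h]; rfl
    · rw [hMsymm j i, hM j i h.le]; unfold mmu
      rw [if_neg (show ¬((i : ℕ) ≤ (j : ℕ)) from by omega)]; rfl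
  have h1 : D * M = 1 := by
    ext i j
    rw [Matrix.mul_apply, Matrix.one_apply]
    have hL : ∑ k : Fin (m + 1), D i k * M k j
        = ∑ k ∈ Finset.range (m + 1), dd m i k * mmu m k j := by
      rw [← Fin.sum_univ_eq_sum_range (fun k => dd m i k * mmu m k j) (m + 1)]
      exact Finset.sum_congr rfl fun k _ => by rw [hD', hM']
    rw [hL, key m hm i j (Nat.lt_succ_iff.mp i.isLt) (Nat.lt_succ_iff.mp j.isLt)]
    by_cases h : i = j
    · rw [if_pos (by rw [h]), if_pos h]
    · rw [if_neg (fun hh => h (Fin.ext hh)), if_neg h]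
  exact ⟨h1, mul_eq_one_comm.mp h1⟩
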